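/- Let n ≥ 4 be even, and let V_0 ⊂ Θ_n be the span of the basis symbols [a,b,c]^0 with a+b+c = n, and V_1 ⊂ Θ_n the span of the basis symbols [a,b,c]^1 with a+b+c = n−1. Then every element of V_0 is congruent, modulo the subspace d(V_1) ⊂ V_0, to a ℚ-linear combination of symbols of the form [0,b,c]^0 with 0 < b < c and b + c = n. (Equivalently, the quotient V_0 / d(V_1) is spanned by the classes of the symbols [0,b,c]^0.) -/

import Mathlib

/-- Validity condition for a theta-graph basis symbol `[a,b,c]^l`:
`0 ≤ a < b < c`, `l ∈ {0,1,2}`, with the parity conventions that `l = 0`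
requires `a + b + c` even and `l = 2` requires `a + b + c` odd. -/
def validSym (a b c l : ℤ) : Prop :=
  0 ≤ a ∧ a < b ∧ b < c ∧ (l = 0 ∨ l = 1 ∨ l = 2) ∧
    (l = 0 → Even (a + b + c)) ∧ (l = 2 → Odd (a + b + c))

/-- The indexing set of valid theta symbols. -/
def SymIdx : Type := {p : ℤ × ℤ × ℤ × ℤ // validSym p.1 p.2.1 p.2.2.1 p.2.2.2}

/-- The theta space `Θ`: the free `ℚ`-vector space on the valid symbols. -/
abbrev Theta : Type := SymIdx →₀ ℚ

/-- The symbol `[a,b,c]^l ∈ Θ`, extended by `0` when the validity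
conditions fail. -/
noncomputable def sym (a b c l : ℤ) : Theta := by
  classical
  exact if h : validSym a b c l then Finsupp.single ⟨(a, b, c, l), h⟩ 1 else 0

/-- Value of the differential on a basis symbol. -/
noncomputable def dAux (p : SymIdx) : Theta := by
  classical
  exact
    if p.1.2.2.2 = 1 then
      sym (p.1.1 + 1) p.1.2.1 p.1.2.2.1 0 - sym p.1.1 (p.1.2.1 + 1) p.1.2.2.1 0
        + sym p.1.1 p.1.2.1 (p.1.2.2.1 + 1) 0
    else if p.1.2.2.2 = 2 then
      (2 : ℚ) • (sym (p.1.1 + 1) p.1.2.1 p.1.2.2.1 1 - sym p.1.1 (p.1.2.1 + 1) p.1.2.2.1 1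
        + sym p.1.1 p.1.2.1 (p.1.2.2.1 + 1) 1)
    else 0

/-- The `ℚ`-linear differential `d : Θ → Θ`, given on basis symbols by
`d [a,b,c]^0 = 0`, `d [a,b,c]^1 = [a+1,b,c]^0 - [a,b+1,c]^0 + [a,b,c+1]^0`,
`d [a,b,c]^2 = 2([a+1,b,c]^1 - [a,b+1,c]^1 + [a,b,c+1]^1)`. -/
noncomputable def dTheta : Theta →ₗ[ℚ] Theta :=
  Finsupp.lsum ℚ fun p => LinearMap.toSpanSingleton ℚ Theta (dAux p)

/-- The weight-`n` part `Θ_n`: the span of the symbols `[a,b,c]^l` with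
`a + b + c + l = n`. -/
noncomputable def ThetaN (n : ℤ) : Submodule ℚ Theta :=
  Submodule.span ℚ {x | ∃ a b c l : ℤ, a + b + c + l = n ∧ x = sym a b c l}


/-- `V_0 ⊂ Θ_n`: the span of the symbols `[a,b,c]^0` with `a + b + c = n`. -/
noncomputable def V0 (n : ℤ) : Submodule ℚ Theta :=
  Submodule.span ℚ {x | ∃ a b c : ℤ, a + b + c = n ∧ x = sym a b c 0}

/-- `V_1 ⊂ Θ_n`: the span of the symbols `[a,b,c]^1` with `a + b + c = n - 1`. -/
noncomputable def V1 (n : ℤ) : Submodule ℚ Theta :=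
  Submodule.span ℚ {x | ∃ a b c : ℤ, a + b + c = n - 1 ∧ x = sym a b c 1}

/-
Since `d [a-1,b,c]^1 = [a,b,c]^0 - [a-1,b+1,c]^0 + [a-1,b,c+1]^0`, modulo `d(V_1)` every
`[a,b,c]^0` with `a > 0` is a combination of weight-`n` symbols whose first entry is `a - 1`;
induction on `a` brings everything down to first entry `0`.
-/

noncomputable def zeroFirstSpan (n : ℤ) : Submodule ℚ Theta :=
  Submodule.span ℚ {z | ∃ b c : ℤ, 0 < b ∧ b < c ∧ b + c = n ∧ z = sym 0 b c 0}

lemma sym_eq_zero {a b c l : ℤ} (h : ¬ validSym a b c l) : sym a b c l = 0 := by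
  rw [sym, dif_neg h]

lemma dTheta_sym_one {a b c : ℤ} (h : validSym a b c 1) :
    dTheta (sym a b c 1) = sym (a + 1) b c 0 - sym a (b + 1) c 0 + sym a b (c + 1) 0 := by
  rw [sym, dif_pos h, dTheta]
  erw [Finsupp.lsum_single]
  simp [dAux]

lemma validSym_one_of_validSym_succ_zero {a b c : ℤ} (ha : 0 ≤ a) (h : validSym (a + 1) b c 0) :
    validSym a b c 1 := by
  obtain ⟨-, hab, hbc, -⟩ := h
  exact ⟨ha, by omega, hbc, by simp, by simp, by simp⟩

lemma sym_succ_zero_eq {a b c : ℤ} (h : validSym a b c 1) :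
    sym (a + 1) b c 0 = dTheta (sym a b c 1) + sym a (b + 1) c 0 - sym a b (c + 1) 0 := by
  rw [dTheta_sym_one h]
  abel

lemma sym_zero_mem_V0 {n a b c : ℤ} (h : a + b + c = n) : sym a b c 0 ∈ V0 n :=
  Submodule.subset_span ⟨a, b, c, h, rfl⟩

lemma dTheta_sym_one_mem_map_V1 {n a b c : ℤ} (h : a + b + c = n - 1) :
    dTheta (sym a b c 1) ∈ (V1 n).map dTheta :=
  Submodule.mem_map_of_mem (Submodule.subset_span ⟨a, b, c, h, rfl⟩)

lemma map_dTheta_V1_le_V0 (n : ℤ) : (V1 n).map dTheta ≤ V0 n := by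
  rw [Submodule.map_le_iff_le_comap, V1, Submodule.span_le]
  rintro _ ⟨a, b, c, hsum, rfl⟩
  by_cases h : validSym a b c 1
  · rw [SetLike.mem_coe, Submodule.mem_comap, dTheta_sym_one h]
    exact add_mem (sub_mem (sym_zero_mem_V0 (by omega)) (sym_zero_mem_V0 (by omega)))
      (sym_zero_mem_V0 (by omega))
  · simp [sym_eq_zero h]

lemma sym_zero_mem_zeroFirstSpan_sup {n a b c : ℤ} (ha : 0 ≤ a) (hsum : a + b + c = n) :
    sym a b c 0 ∈ zeroFirstSpan n ⊔ (V1 n).map dTheta := by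
  induction a, ha using Int.leInduction generalizing b c with
  | base =>
    by_cases h : validSym 0 b c 0
    · exact Submodule.mem_sup_left
        (Submodule.subset_span ⟨b, c, h.2.1, h.2.2.1, by omega, rfl⟩)
    · simp [sym_eq_zero h]
  | succ a ha ih =>
    by_cases h : validSym (a + 1) b c 0
    · rw [sym_succ_zero_eq (validSym_one_of_validSym_succ_zero ha h)]
      exact sub_mem (add_mem (Submodule.mem_sup_right (dTheta_sym_one_mem_map_V1 (by omega)))
        (ih (by omega))) (ih (by omega))
    · simp [sym_eq_zero h]

lemma V0_le_zeroFirstSpan_sup (n : ℤ) : V0 n ≤ zeroFirstSpan n ⊔ (V1 n).map dTheta := by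
  rw [V0, Submodule.span_le]
  rintro _ ⟨a, b, c, hsum, rfl⟩
  by_cases ha : 0 ≤ a
  · exact sym_zero_mem_zeroFirstSpan_sup ha hsum
  · simp [sym_eq_zero fun h : validSym a b c 0 => ha h.1]

theorem quotient_spanned_by_zero_first_entry_general (n : ℤ) :
    Submodule.map dTheta (V1 n) ≤ V0 n ∧
    ∀ x ∈ V0 n, ∃ y ∈ Submodule.span ℚ
        {z | ∃ b c : ℤ, 0 < b ∧ b < c ∧ b + c = n ∧ z = sym 0 b c 0},
      x - y ∈ Submodule.map dTheta (V1 n) := by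
  refine ⟨map_dTheta_V1_le_V0 n, fun x hx => ?_⟩
  obtain ⟨y, hy, z, hz, rfl⟩ := Submodule.mem_sup.mp (V0_le_zeroFirstSpan_sup n hx)
  exact ⟨y, hy, by rwa [add_sub_cancel_left]⟩

/-- For even `n ≥ 4`, `d(V_1) ⊆ V_0`, and every element of `V_0` is congruent
modulo `d(V_1)` to a `ℚ`-linear combination of symbols `[0,b,c]^0` with
`0 < b < c` and `b + c = n`. -/
theorem quotient_spanned_by_zero_first_entry (n : ℤ) (hn : 4 ≤ n) (hne : Even n) :
    Submodule.map dTheta (V1 n) ≤ V0 n ∧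
    ∀ x ∈ V0 n, ∃ y ∈ Submodule.span ℚ
        {z | ∃ b c : ℤ, 0 < b ∧ b < c ∧ b + c = n ∧ z = sym 0 b c 0},
      x - y ∈ Submodule.map dTheta (V1 n) :=
  quotient_spanned_by_zero_first_entry_general n
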